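/- Let m > 1/2, α ≥ 0, and let 0 ≤ n ≤ j be integers with n < m - 1/2. Then for all measurable f : [0,∞) → ℝ, sup_{y≥0} (ρ_j(y)/ρ_n(y))^{1/2} ∫_0^y |f(z)| dz ≤ (2(m-n)-1)^{-1/2} (∫_0^∞ |f|² ρ_j)^{1/2}. -/

import Mathlib

/-! Cauchy–Schwarz against the weight `ρ_j` on `(0, y]` gives
`(∫₀^y |f|)² ≤ (∫ f² ρ_j) (∫₀^y ρ_j⁻¹)`. Since `ρ_j / ρ_n` is non-increasing, for `z ≤ y` we have
`(ρ_j(y) / ρ_n(y)) ρ_j(z)⁻¹ ≤ ρ_n(z)⁻¹ ≤ (1 + z)^{-2(m-n)}`, and the last function has integral at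
most `1 / (2(m-n) - 1)` over every `(0, y]` because `2(m - n) > 1`. -/

open MeasureTheory

/-- The weight functions `ρ_j(y) = (1+y)^{2m} ∏_{k=1}^j (1 + y/k^α)^{-2}`. -/
noncomputable def rho (m α : ℝ) (j : ℕ) (y : ℝ) : ℝ :=
  (1 + y) ^ (2 * m) * ∏ k ∈ Finset.Icc 1 j, ((1 + y / (k : ℝ) ^ α) ^ 2)⁻¹

open Set

theorem memLp_two_sqrt {X : Type*} [MeasurableSpace X] {μ : Measure X} {g : X → ℝ}
    (hg : Integrable g μ) (hg0 : 0 ≤ᵐ[μ] g) : MemLp (fun x => √(g x)) 2 μ := by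
  refine (memLp_two_iff_integrable_sq
    (Real.continuous_sqrt.comp_aestronglyMeasurable hg.aestronglyMeasurable)).mpr ?_
  refine hg.congr ?_
  filter_upwards [hg0] with x hx
  exact (Real.sq_sqrt hx).symm

theorem integral_abs_le_sqrt_mul_sqrt {X : Type*} [MeasurableSpace X] {μ : Measure X}
    {f w : X → ℝ} (hw : ∀ᵐ x ∂μ, 0 < w x) (hfw : Integrable (fun x => f x ^ 2 * w x) μ)
    (hw_inv : Integrable (fun x => (w x)⁻¹) μ) :
    ∫ x, |f x| ∂μ ≤ √(∫ x, f x ^ 2 * w x ∂μ) * √(∫ x, (w x)⁻¹ ∂μ) := by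
  have hfw0 : 0 ≤ᵐ[μ] fun x => f x ^ 2 * w x := by
    filter_upwards [hw] with x hx using by positivity
  have hw_inv0 : 0 ≤ᵐ[μ] fun x => (w x)⁻¹ := by
    filter_upwards [hw] with x hx using by positivity
  have holder := integral_mul_le_Lp_mul_Lq_of_nonneg Real.HolderConjugate.two_two
    (Filter.Eventually.of_forall fun x => Real.sqrt_nonneg _)
    (Filter.Eventually.of_forall fun x => Real.sqrt_nonneg _)
    (by rw [ENNReal.ofReal_ofNat]; exact memLp_two_sqrt hfw hfw0)
    (by rw [ENNReal.ofReal_ofNat]; exact memLp_two_sqrt hw_inv hw_inv0)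
  have hprod : (fun x => √(f x ^ 2 * w x) * √(w x)⁻¹) =ᵐ[μ] fun x => |f x| := by
    filter_upwards [hw] with x hx
    rw [← Real.sqrt_mul (by positivity), mul_inv_cancel_right₀ hx.ne', Real.sqrt_sq_eq_abs]
  have hsq {g : X → ℝ} (hg0 : 0 ≤ᵐ[μ] g) : ∫ x, √(g x) ^ (2 : ℝ) ∂μ = ∫ x, g x ∂μ := by
    refine integral_congr_ae ?_
    filter_upwards [hg0] with x hx
    rw [Real.rpow_two, Real.sq_sqrt hx]
  rwa [integral_congr_ae hprod, hsq hfw0, hsq hw_inv0, ← Real.sqrt_eq_rpow,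
    ← Real.sqrt_eq_rpow] at holder

theorem integral_one_add_rpow_neg_le {s : ℝ} (hs : 1 < s) {y : ℝ} (hy : 0 ≤ y) :
    ∫ z in Ioc 0 y, (1 + z) ^ (-s) ≤ 1 / (s - 1) := by
  rw [← intervalIntegral.integral_of_le hy, intervalIntegral.integral_comp_add_left
    (fun u => u ^ (-s)), integral_rpow (Or.inr ⟨by linarith, fun h => ?_⟩)]
  · rw [add_zero, Real.one_rpow, show -s + 1 = -(s - 1) by ring, div_neg, ← neg_div, neg_sub]
    have : 0 ≤ (1 + y) ^ (-(s - 1)) := by positivity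
    gcongr
    linarith
  · rcases mem_uIcc.mp h with ⟨h1, _⟩ | ⟨_, h2⟩ <;> linarith

section Weights

variable (m α : ℝ)

theorem rho_pos (j : ℕ) {z : ℝ} (hz : 0 ≤ z) : 0 < rho m α j z := by
  unfold rho
  positivity

theorem rho_continuousOn (j : ℕ) : ContinuousOn (rho m α j) (Ici 0) := by
  refine ContinuousOn.mul ?_ (continuousOn_finsetProd _ fun k _ => ?_)
  · exact (continuousOn_const.add continuousOn_id).rpow_const fun z (hz : 0 ≤ z) =>
      Or.inl (by simp only [Pi.add_apply, id_eq]; linarith)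
  · exact ((continuousOn_const.add (continuousOn_id.div_const _)).pow 2).inv₀
      fun z (hz : 0 ≤ z) => (pow_pos (by positivity : 0 < 1 + z / (k : ℝ) ^ α) 2).ne'

theorem integrableOn_inv_rho (j : ℕ) (y : ℝ) :
    IntegrableOn (fun z => (rho m α j z)⁻¹) (Ioc 0 y) :=
  (((rho_continuousOn m α j).mono Icc_subset_Ici_self).inv₀
    fun _ hz => (rho_pos m α j hz.1).ne').integrableOn_Icc.mono_set Ioc_subset_Icc_self

theorem rho_eq_rho_mul_prod {n j : ℕ} (hnj : n ≤ j) (z : ℝ) :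
    rho m α j z = rho m α n z * ∏ k ∈ Finset.Ioc n j, ((1 + z / (k : ℝ) ^ α) ^ 2)⁻¹ := by
  have hIcc (i : ℕ) : Finset.Icc 1 i = Finset.Ioc 0 i := by
    rw [← Finset.Icc_add_one_left_eq_Ioc, zero_add]
  simp only [rho, mul_assoc, hIcc, Finset.prod_Ioc_consecutive _ (Nat.zero_le n) hnj]

theorem rho_div_rho_antitoneOn {n j : ℕ} (hnj : n ≤ j) :
    AntitoneOn (fun z => rho m α j z / rho m α n z) (Ici 0) := by
  intro z (hz : 0 ≤ z) y (hy : 0 ≤ y) hzy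
  simp only [rho_eq_rho_mul_prod m α hnj, mul_div_cancel_left₀ _ (rho_pos m α n hz).ne',
    mul_div_cancel_left₀ _ (rho_pos m α n hy).ne']
  gcongr

variable {α}

theorem one_add_rpow_le_rho (hα : 0 ≤ α) (n : ℕ) {z : ℝ} (hz : 0 ≤ z) :
    (1 + z) ^ (2 * (m - n)) ≤ rho m α n z := by
  have h1z : 0 < 1 + z := by positivity
  calc (1 + z) ^ (2 * (m - n)) = (1 + z) ^ (2 * m) * ∏ _k ∈ Finset.Icc 1 n, ((1 + z) ^ 2)⁻¹ := by
        rw [Finset.prod_const, Nat.card_Icc, add_tsub_cancel_right, mul_sub, Real.rpow_sub h1z,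
          Real.rpow_mul_natCast h1z.le, Real.rpow_two, div_eq_mul_inv, inv_pow]
    _ ≤ rho m α n z := by
        rw [rho]
        gcongr with k hk
        exact div_le_self hz (Real.one_le_rpow (mod_cast (Finset.mem_Icc.mp hk).1) hα)

theorem rho_div_rho_mul_integral_inv_rho_le (hα : 0 ≤ α) {n j : ℕ} (hnj : n ≤ j)
    (hn : (n : ℝ) < m - 1 / 2) {y : ℝ} (hy : 0 ≤ y) :
    rho m α j y / rho m α n y * ∫ z in Ioc 0 y, (rho m α j z)⁻¹ ≤ 1 / (2 * (m - n) - 1) := by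
  have hbound : ∀ z ∈ Ioc 0 y,
      rho m α j y / rho m α n y * (rho m α j z)⁻¹ ≤ (1 + z) ^ (-(2 * (m - n))) := by
    rintro z ⟨hz, hzy⟩
    have hρj := rho_pos m α j hz.le
    have hρn := rho_pos m α n hz.le
    calc rho m α j y / rho m α n y * (rho m α j z)⁻¹
        ≤ rho m α j z / rho m α n z * (rho m α j z)⁻¹ := by
          gcongr ?_ * _
          exact rho_div_rho_antitoneOn m α hnj (mem_Ici.mpr hz.le) (mem_Ici.mpr (hz.le.trans hzy))
            hzy
      _ = (rho m α n z)⁻¹ := by field_simp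
      _ ≤ ((1 + z) ^ (2 * (m - n)))⁻¹ := by
          gcongr
          exact one_add_rpow_le_rho m hα n hz.le
      _ = (1 + z) ^ (-(2 * (m - n))) := (Real.rpow_neg (by positivity) _).symm
  have hcont : ContinuousOn (fun z : ℝ => (1 + z) ^ (-(2 * (m - n)))) (Icc 0 y) :=
    (continuousOn_const.add continuousOn_id).rpow_const fun z hz =>
      Or.inl (by simp only [Pi.add_apply, id_eq]; linarith [hz.1])
  rw [← integral_const_mul]
  calc _ ≤ ∫ z in Ioc 0 y, (1 + z) ^ (-(2 * (m - n))) :=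
        setIntegral_mono_on ((integrableOn_inv_rho m α j y).const_mul _)
          (hcont.integrableOn_Icc.mono_set Ioc_subset_Icc_self) measurableSet_Ioc hbound
    _ ≤ 1 / (2 * (m - n) - 1) := integral_one_add_rpow_neg_le (by linarith) hy

end Weights

theorem stmt4_general (m α : ℝ) (hα : 0 ≤ α) (n j : ℕ) (hnj : n ≤ j)
    (hn : (n : ℝ) < m - 1/2) (f : ℝ → ℝ)
    (hint : Integrable (fun z => f z ^ 2 * rho m α j z) (volume.restrict (Set.Ioi 0))) :
    ∀ y : ℝ, 0 ≤ y →
      Real.sqrt (rho m α j y / rho m α n y) * ∫ z in (0:ℝ)..y, |f z|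
        ≤ Real.sqrt (1 / (2 * (m - (n : ℝ)) - 1)) *
          Real.sqrt (∫ z in Set.Ioi (0:ℝ), f z ^ 2 * rho m α j z) := by
  intro y hy
  have hρ : ∀ᵐ z ∂volume.restrict (Ioc 0 y), 0 < rho m α j z :=
    ae_restrict_of_forall_mem measurableSet_Ioc fun z hz => rho_pos m α j hz.1.le
  have hrestrict : ∫ z in Ioc 0 y, f z ^ 2 * rho m α j z ≤ ∫ z in Ioi 0, f z ^ 2 * rho m α j z :=
    setIntegral_mono_set hint
      (ae_restrict_of_forall_mem measurableSet_Ioi fun z hz =>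
        mul_nonneg (sq_nonneg _) (rho_pos m α j (le_of_lt hz)).le)
      Ioc_subset_Ioi_self.eventuallyLE
  have hR : 0 ≤ rho m α j y / rho m α n y := div_nonneg (rho_pos m α j hy).le (rho_pos m α n hy).le
  rw [intervalIntegral.integral_of_le hy]
  calc _ ≤ √(rho m α j y / rho m α n y) * (√(∫ z in Ioc 0 y, f z ^ 2 * rho m α j z) *
          √(∫ z in Ioc 0 y, (rho m α j z)⁻¹)) := by
        gcongr
        exact integral_abs_le_sqrt_mul_sqrt hρ (IntegrableOn.mono_set hint Ioc_subset_Ioi_self)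
          (integrableOn_inv_rho m α j y)
    _ = √(∫ z in Ioc 0 y, f z ^ 2 * rho m α j z) *
          √(rho m α j y / rho m α n y * ∫ z in Ioc 0 y, (rho m α j z)⁻¹) := by
        rw [Real.sqrt_mul hR]; ring
    _ ≤ _ := by
        rw [mul_comm (√(1 / _))]
        gcongr
        exact rho_div_rho_mul_integral_inv_rho_le m hα hnj hn hy

theorem stmt4 (m α : ℝ) (hm : 1/2 < m) (hα : 0 ≤ α) (n j : ℕ) (hnj : n ≤ j)
    (hn : (n : ℝ) < m - 1/2) (f : ℝ → ℝ) (hf : Measurable f)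
    (hint : Integrable (fun z => f z ^ 2 * rho m α j z) (volume.restrict (Set.Ioi 0))) :
    ∀ y : ℝ, 0 ≤ y →
      Real.sqrt (rho m α j y / rho m α n y) * ∫ z in (0:ℝ)..y, |f z|
        ≤ Real.sqrt (1 / (2 * (m - (n : ℝ)) - 1)) *
          Real.sqrt (∫ z in Set.Ioi (0:ℝ), f z ^ 2 * rho m α j z) :=
  stmt4_general m α hα n j hnj hn f hint
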